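/- Let α ∈ (1/3, 1), let x, y : [0,2] → ℝ be α-Hölder, let A be an α-Lévy area of order 0 associated with γ = (x, y), and let f : ℝ → ℝ be of class C². For ε ∈ (0,1] and n ∈ ℕ set I_n(ε) = 2^n ε^{−1} ∫_0^{ε⌊1/ε⌋} ((f(y(u)) + f(y(u + ε2^{−n})))/2)(x(u + ε2^{−n}) − x(u)) du + 2^n ε^{−1} ∫_0^{ε⌊1/ε⌋} f′(y(u)) A_{u, u+ε2^{−n}} du. Then there exists C > 0 such that |I_{n+1}(ε) − I_n(ε)| ≤ C (ε 2^{−n})^{min(3α−1, α)} for all n ∈ ℕ and all ε ∈ (0,1]. -/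

import Mathlib

open MeasureTheory Filter Set

/-- `z` is `α`-Hölder on the interval `[a, b]`. -/
def HolderOnIcc (α a b : ℝ) (z : ℝ → ℝ) : Prop :=
  ∃ L > 0, ∀ s ∈ Set.Icc a b, ∀ t ∈ Set.Icc a b, |z t - z s| ≤ L * |t - s| ^ α

/-- `A` is an `α`-Lévy area of order 0 associated with `γ = (x, y)` on `[0, 2]`. -/
def IsLevyArea0 (α : ℝ) (x y : ℝ → ℝ) (A : ℝ → ℝ → ℝ) : Prop :=
  (∀ r ∈ Set.Icc (0:ℝ) 2, ∀ s ∈ Set.Icc (0:ℝ) 2, ∀ t ∈ Set.Icc (0:ℝ) 2,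
    A r s + A s t + A t r
      = -(1/2) * ((y t - y s) * (x r - x s) - (y r - y s) * (x t - x s)))
  ∧ ∃ C > 0, ∀ s ∈ Set.Icc (0:ℝ) 2, ∀ t ∈ Set.Icc (0:ℝ) 2,
      |A s t| ≤ C * |t - s| ^ (2 * α)

/-- The `ε`-approximation `I_ε^{[a,b]}(f)` of the corrected symmetric integral. -/
noncomputable def Ieps (x y : ℝ → ℝ) (A : ℝ → ℝ → ℝ) (f : ℝ → ℝ) (a b ε : ℝ) : ℝ :=
  ε⁻¹ * (∫ u in a..b, ((f (y u) + f (y (u + ε))) / 2) * (x (u + ε) - x u))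
    + ε⁻¹ * (∫ u in a..b, deriv f (y u) * A u (u + ε))


/-- The dyadic refinement `I_n(ε)` of the approximation of the corrected symmetric
integral on `[0, 1]`. -/
noncomputable def Idyad (x y : ℝ → ℝ) (A : ℝ → ℝ → ℝ) (f : ℝ → ℝ) (n : ℕ) (ε : ℝ) : ℝ :=
  2 ^ n * ε⁻¹ * (∫ u in (0:ℝ)..(ε * (⌊1/ε⌋ : ℝ)),
      ((f (y u) + f (y (u + ε / 2 ^ n))) / 2) * (x (u + ε / 2 ^ n) - x u))
    + 2 ^ n * ε⁻¹ * (∫ u in (0:ℝ)..(ε * (⌊1/ε⌋ : ℝ)), deriv f (y u) * A u (u + ε / 2 ^ n))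

/-!
Write `h = ε 2⁻ⁿ` and `Φ(s, t) = ((f(y s) + f(y t)) / 2)(x t - x s) + f'(y s) A s t`, so that
`I_n(ε)` and `I_{n+1}(ε)` are `h⁻¹ ∫ Φ(u, u + h)` and `(h/2)⁻¹ ∫ Φ(u, u + h/2)` over `[0, ε⌊1/ε⌋]`.
Shifting one copy of the finer integral by `h/2` turns `2 ∫ Φ(u, u + h/2) - ∫ Φ(u, u + h)` into
the integral of the three-point defect `Φ(u, m) + Φ(m, v) - Φ(u, v)` (`m = u + h/2`, `v = u + h`)
plus two boundary integrals over intervals of length `h/2`. Chen's relation rewrites the defect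
as second-order Taylor remainders of `f` times increments of `x`, plus `(f'(y m) - f'(y u)) A m v`,
so it is `O(h^{3α})`; the boundary integrands are `O(h^α)`. Dividing by `h` leaves
`O(h^{3α-1} + h^α)`.
-/

open scoped NNReal Topology

theorem continuousWithinAt_of_abs_sub_le {z φ : ℝ → ℝ} {S : Set ℝ} {s : ℝ}
    (hφ : ContinuousWithinAt φ S s) (hφs : φ s = 0) (hz : ∀ t ∈ S, |z t - z s| ≤ φ t) :
    ContinuousWithinAt z S s := by
  have hφ0 : Tendsto φ (𝓝[S] s) (𝓝 0) := hφs ▸ hφ.tendsto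
  rw [ContinuousWithinAt, tendsto_iff_norm_sub_tendsto_zero]
  simp only [Real.norm_eq_abs]
  exact squeeze_zero' (Eventually.of_forall fun _ => abs_nonneg _)
    (eventually_nhdsWithin_of_forall hz) hφ0

theorem HolderOnIcc.continuousOn {α a b : ℝ} {z : ℝ → ℝ} (hα : 0 < α)
    (hz : HolderOnIcc α a b z) : ContinuousOn z (Icc a b) := by
  obtain ⟨L, -, hL⟩ := hz
  intro s hs
  refine continuousWithinAt_of_abs_sub_le ?_ (by simp [Real.zero_rpow hα.ne']) (hL s hs)
  exact Continuous.continuousWithinAt (by fun_prop (disch := positivity))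

theorem abs_sub_sub_deriv_mul_le {f : ℝ → ℝ} (hf : Differentiable ℝ f) {s : Set ℝ}
    (hs : Convex ℝ s) {M : ℝ≥0} (hf' : LipschitzOnWith M (deriv f) s) {a b c : ℝ}
    (ha : a ∈ s) (hb : b ∈ s) (hc : c ∈ s) :
    |f b - f a - deriv f c * (b - a)| ≤ M * (|b - a| + |a - c|) * |b - a| := by
  have hg (t : ℝ) : HasDerivAt (fun t => f t - deriv f c * t) (deriv f t - deriv f c) t :=
    ((hf t).hasDerivAt.sub ((hasDerivAt_id' t).const_mul (deriv f c))).congr_deriv (by ring)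
  have bound : ∀ t ∈ uIcc a b, ‖deriv f t - deriv f c‖ ≤ M * (|b - a| + |a - c|) := by
    intro t ht
    have hts : t ∈ s := (convex_iff_ordConnected.mp hs).uIcc_subset ha hb ht
    calc ‖deriv f t - deriv f c‖ ≤ M * |t - c| := by
          simpa [Real.dist_eq] using hf'.dist_le_mul t hts c hc
      _ ≤ M * (|b - a| + |a - c|) := by
          gcongr
          exact (abs_sub_le t a c).trans (add_le_add_left (abs_sub_left_of_mem_uIcc ht) _)
  have := (convex_uIcc a b).norm_image_sub_le_of_norm_hasDerivWithin_le
    (fun t _ => (hg t).hasDerivWithinAt) bound left_mem_uIcc right_mem_uIcc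
  rw [Real.norm_eq_abs, Real.norm_eq_abs] at this
  convert this using 2
  ring

theorem abs_two_mul_integral_sub_integral_le {φ χ : ℝ → ℝ} {a b c D B : ℝ} (hc : 0 ≤ c)
    (hab : a ≤ b) (hφ : IntervalIntegrable φ volume a (b + c))
    (hχ : IntervalIntegrable χ volume a b)
    (hD : ∀ u ∈ Icc a b, |φ u + φ (u + c) - χ u| ≤ D) (hB : ∀ u ∈ Icc a (b + c), |φ u| ≤ B) :
    |2 * (∫ u in a..b, φ u) - ∫ u in a..b, χ u| ≤ D * (b - a) + 2 * c * B := by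
  have integral_le {g : ℝ → ℝ} {p q C : ℝ} (hpq : p ≤ q) (hg : ∀ u ∈ Icc p q, |g u| ≤ C) :
      |∫ u in p..q, g u| ≤ C * (q - p) := by
    simpa [abs_of_nonneg (sub_nonneg.mpr hpq)] using
      intervalIntegral.norm_integral_le_of_norm_le_const (f := g) (C := C) fun u hu =>
        (hg u (Ioc_subset_Icc_self (uIoc_of_le hpq ▸ hu)) : ‖g u‖ ≤ C)
  have hφ' {p q : ℝ} (hp : p ∈ Icc a (b + c)) (hq : q ∈ Icc a (b + c)) :
      IntervalIntegrable φ volume p q :=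
    hφ.mono_set (uIcc_subset_uIcc (Icc_subset_uIcc hp) (Icc_subset_uIcc hq))
  have ha : a ∈ Icc a (b + c) := ⟨le_rfl, by linarith⟩
  have hb : b ∈ Icc a (b + c) := ⟨hab, by linarith⟩
  have hac : a + c ∈ Icc a (b + c) := ⟨by linarith, by linarith⟩
  have hbc : b + c ∈ Icc a (b + c) := ⟨by linarith, le_rfl⟩
  have hshift : IntervalIntegrable (fun u => φ (u + c)) volume a b := by
    simpa using (hφ' hac hbc).comp_add_right c
  have hsplit : 2 * (∫ u in a..b, φ u) - ∫ u in a..b, χ u =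
      (∫ u in a..b, φ u + φ (u + c) - χ u)
        + ((∫ u in a..a + c, φ u) - ∫ u in b..b + c, φ u) := by
    rw [← intervalIntegral.integral_interval_sub_interval_comm (hφ' ha hb) (hφ' hac hbc)
      (hφ' ha hac), intervalIntegral.integral_sub ((hφ' ha hb).add hshift) hχ,
      intervalIntegral.integral_add (hφ' ha hb) hshift, intervalIntegral.integral_comp_add_right]
    ring
  have h1 := integral_le hab hD
  have h2 := integral_le (by linarith : a ≤ a + c) fun u hu => hB u ⟨hu.1, by linarith [hu.2]⟩
  have h3 := integral_le (by linarith : b ≤ b + c) fun u hu => hB u ⟨by linarith [hu.1], hu.2⟩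
  rw [hsplit]
  have h4 := abs_add_le (∫ u in a..b, φ u + φ (u + c) - χ u)
    ((∫ u in a..a + c, φ u) - ∫ u in b..b + c, φ u)
  have h5 := abs_sub (∫ u in a..a + c, φ u) (∫ u in b..b + c, φ u)
  linarith

def ChenRelation (x y : ℝ → ℝ) (A : ℝ → ℝ → ℝ) : Prop :=
  ∀ r ∈ Icc (0:ℝ) 2, ∀ s ∈ Icc (0:ℝ) 2, ∀ t ∈ Icc (0:ℝ) 2,
    A r s + A s t + A t r = -(1/2) * ((y t - y s) * (x r - x s) - (y r - y s) * (x t - x s))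

section LevyArea

variable {α : ℝ} {x y : ℝ → ℝ} {A : ℝ → ℝ → ℝ}

theorem ChenRelation.add_sub (hA : ChenRelation x y A) {u m v : ℝ} (hu : u ∈ Icc (0:ℝ) 2)
    (hm : m ∈ Icc (0:ℝ) 2) (hv : v ∈ Icc (0:ℝ) 2) :
    A u m + A m v - A u v
      = -(1/2) * ((y v - y m) * (x u - x m) - (y u - y m) * (x v - x m)) := by
  linear_combination hA u hu m hm v hv - hA u hu v hv v hv + hA v hv v hv v hv / 3

theorem IsLevyArea0.continuousOn (hα : 0 < α) (hA : IsLevyArea0 α x y A)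
    (hx : ContinuousOn x (Icc 0 2)) (hy : ContinuousOn y (Icc 0 2)) :
    ContinuousOn (Function.uncurry A) (Icc 0 2 ×ˢ Icc 0 2) := by
  obtain ⟨hChen, C, -, hC⟩ : ChenRelation x y A ∧ _ := hA
  have h0 : (0:ℝ) ∈ Icc (0:ℝ) 2 := ⟨le_rfl, zero_le_two⟩
  -- Chen's relation through `0` writes `A 0 t - A 0 s` as `A s t` plus an area term that is
  -- continuous in `t` and vanishes at `t = s`.
  have hA0 : ContinuousOn (A 0) (Icc 0 2) := by
    intro s hs
    refine continuousWithinAt_of_abs_sub_le (φ := fun t => C * |t - s| ^ (2 * α)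
      + |-(1/2) * ((y t - y s) * (x 0 - x s) - (y 0 - y s) * (x t - x s))|) ?_
      (by simp [Real.zero_rpow (by positivity : 2 * α ≠ 0)]) fun t ht => ?_
    · exact ContinuousOn.continuousWithinAt (by fun_prop (disch := positivity)) hs
    · have := hChen.add_sub h0 hs ht
      calc |A 0 t - A 0 s|
          = |A s t - -(1/2) * ((y t - y s) * (x 0 - x s) - (y 0 - y s) * (x t - x s))| := by
            congr 1; linarith
        _ ≤ _ := (abs_sub _ _).trans (add_le_add_left (hC s hs t ht) _)
  have hfst : MapsTo Prod.fst (Icc (0:ℝ) 2 ×ˢ Icc (0:ℝ) 2) (Icc 0 2) := fun p hp => hp.1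
  have hsnd : MapsTo Prod.snd (Icc (0:ℝ) 2 ×ˢ Icc (0:ℝ) 2) (Icc 0 2) := fun p hp => hp.2
  have hA1 := hA0.comp continuousOn_fst hfst
  have hA2 := hA0.comp continuousOn_snd hsnd
  have hx1 := hx.comp continuousOn_fst hfst
  have hx2 := hx.comp continuousOn_snd hsnd
  have hy1 := hy.comp continuousOn_fst hfst
  have hy2 := hy.comp continuousOn_snd hsnd
  refine ContinuousOn.congr (f := fun p : ℝ × ℝ => A 0 p.2 - A 0 p.1
    + -(1/2) * ((y p.2 - y p.1) * (x 0 - x p.1) - (y 0 - y p.1) * (x p.2 - x p.1)))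
    ((hA2.sub hA1).add (continuousOn_const.mul
    (((hy2.sub hy1).mul (continuousOn_const.sub hx1)).sub
      ((continuousOn_const.sub hy1).mul (hx2.sub hx1))))) fun p hp => ?_
  have := hChen.add_sub h0 hp.1 hp.2
  simp only [Function.uncurry]
  linarith

end LevyArea

noncomputable def corrIncr (x y : ℝ → ℝ) (A : ℝ → ℝ → ℝ) (f : ℝ → ℝ) (s t : ℝ) : ℝ :=
  ((f (y s) + f (y t)) / 2) * (x t - x s) + deriv f (y s) * A s t

section CorrIncr

variable {α : ℝ} {x y : ℝ → ℝ} {A : ℝ → ℝ → ℝ} {f : ℝ → ℝ}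

theorem corrIncr_add_corrIncr_sub (hA : ChenRelation x y A) {u m v : ℝ}
    (hu : u ∈ Icc (0:ℝ) 2) (hm : m ∈ Icc (0:ℝ) 2) (hv : v ∈ Icc (0:ℝ) 2) :
    corrIncr x y A f u m + corrIncr x y A f m v - corrIncr x y A f u v
      = (f (y m) - f (y u) - deriv f (y u) * (y m - y u)) / 2 * (x v - x m)
        + (f (y v) - f (y m) - deriv f (y u) * (y v - y m)) / 2 * (x u - x m)
        + (deriv f (y m) - deriv f (y u)) * A m v := by
  unfold corrIncr
  linear_combination deriv f (y u) * hA.add_sub hu hm hv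

theorem abs_corrIncr_add_corrIncr_sub_le (hA : ChenRelation x y A) (hf : Differentiable ℝ f)
    {s : Set ℝ} (hs : Convex ℝ s) {M : ℝ≥0} (hf' : LipschitzOnWith M (deriv f) s)
    {u m v X Y Z : ℝ} (hu : u ∈ Icc (0:ℝ) 2) (hm : m ∈ Icc (0:ℝ) 2) (hv : v ∈ Icc (0:ℝ) 2)
    (hyu : y u ∈ s) (hym : y m ∈ s) (hyv : y v ∈ s)
    (hxum : |x m - x u| ≤ X) (hxmv : |x v - x m| ≤ X)
    (hyum : |y m - y u| ≤ Y) (hymv : |y v - y m| ≤ Y) (hAmv : |A m v| ≤ Z) :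
    |corrIncr x y A f u m + corrIncr x y A f m v - corrIncr x y A f u v|
      ≤ M * (3 / 2 * Y ^ 2 * X + Y * Z) := by
  have hY : 0 ≤ Y := (abs_nonneg _).trans hyum
  have hR1 : |f (y m) - f (y u) - deriv f (y u) * (y m - y u)| ≤ M * Y ^ 2 := by
    refine (abs_sub_sub_deriv_mul_le hf hs hf' hyu hym hyu).trans ?_
    rw [sub_self, abs_zero, add_zero, mul_assoc, ← sq]
    gcongr
  have hR2 : |f (y v) - f (y m) - deriv f (y u) * (y v - y m)| ≤ M * (2 * Y ^ 2) := by
    refine (abs_sub_sub_deriv_mul_le hf hs hf' hym hyv hyu).trans ?_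
    calc (M : ℝ) * (|y v - y m| + |y m - y u|) * |y v - y m| ≤ M * (Y + Y) * Y := by gcongr
      _ = M * (2 * Y ^ 2) := by ring
  have hdf : |deriv f (y m) - deriv f (y u)| ≤ M * Y := by
    simpa [Real.dist_eq] using
      (hf'.dist_le_mul _ hym _ hyu).trans (by gcongr; rwa [Real.dist_eq])
  rw [corrIncr_add_corrIncr_sub hA hu hm hv]
  refine (abs_add_three _ _ _).trans ?_
  simp only [abs_mul, abs_div, abs_two]
  rw [abs_sub_comm (x u)]
  calc _ ≤ M * Y ^ 2 / 2 * X + M * (2 * Y ^ 2) / 2 * X + M * Y * Z := by gcongr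
    _ = M * (3 / 2 * Y ^ 2 * X + Y * Z) := by ring

theorem exists_abs_corrIncr_add_corrIncr_sub_le (hα : 0 ≤ α) (hx : HolderOnIcc α 0 2 x)
    (hy : HolderOnIcc α 0 2 y) (hA : IsLevyArea0 α x y A) (hf : ContDiff ℝ 2 f) {K : ℝ}
    (hyK : MapsTo y (Icc 0 2) (Icc (-K) K)) :
    ∃ C ≥ 0, ∀ h ≥ 0, ∀ u ∈ Icc (0:ℝ) 2, ∀ m ∈ Icc (0:ℝ) 2, ∀ v ∈ Icc (0:ℝ) 2,
      |m - u| ≤ h → |v - m| ≤ h →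
      |corrIncr x y A f u m + corrIncr x y A f m v - corrIncr x y A f u v|
        ≤ C * h ^ (3 * α) := by
  obtain ⟨Lx, hLx, hx⟩ := hx
  obtain ⟨Ly, hLy, hy⟩ := hy
  obtain ⟨hChen, CA, hCA, hA⟩ : ChenRelation x y A ∧ _ := hA
  obtain ⟨M, hM⟩ := (hf.deriv' (n := 1)).contDiffOn.exists_lipschitzOnWith one_ne_zero
    (convex_Icc (-K) K) isCompact_Icc
  refine ⟨M * (3 / 2 * Ly ^ 2 * Lx + Ly * CA), by positivity,
    fun h hh u hu m hm v hv hum hmv => ?_⟩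
  have key := abs_corrIncr_add_corrIncr_sub_le (f := f) hChen (hf.differentiable (by norm_num))
    (convex_Icc (-K) K) hM hu hm hv (hyK hu) (hyK hm) (hyK hv)
    (X := Lx * h ^ α) (Y := Ly * h ^ α) (Z := CA * h ^ (2 * α))
    ((hx u hu m hm).trans (by gcongr))
    ((hx m hm v hv).trans (by gcongr))
    ((hy u hu m hm).trans (by gcongr))
    ((hy m hm v hv).trans (by gcongr))
    ((hA m hm v hv).trans (by gcongr))
  have hpow_mul (k : ℕ) : h ^ (k * α) = (h ^ α) ^ k := by
    rw [mul_comm, Real.rpow_mul hh, Real.rpow_natCast]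
  refine key.trans (le_of_eq ?_)
  rw [show (3:ℝ) = (3:ℕ) by norm_num, show (2:ℝ) = (2:ℕ) by norm_num, hpow_mul, hpow_mul]
  ring

theorem exists_abs_corrIncr_le (hα : 0 ≤ α) (hx : HolderOnIcc α 0 2 x)
    (hA : IsLevyArea0 α x y A) (hf : ContDiff ℝ 1 f) {K : ℝ}
    (hyK : MapsTo y (Icc 0 2) (Icc (-K) K)) :
    ∃ C ≥ 0, ∀ h ≤ 1, ∀ s ∈ Icc (0:ℝ) 2, ∀ t ∈ Icc (0:ℝ) 2,
      |t - s| ≤ h → |corrIncr x y A f s t| ≤ C * h ^ α := by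
  obtain ⟨Lx, hLx, hx⟩ := hx
  obtain ⟨-, CA, hCA, hA⟩ := hA
  obtain ⟨M₀, hM₀⟩ := isCompact_Icc.exists_bound_of_continuousOn hf.continuous.continuousOn
  obtain ⟨M₁, hM₁⟩ :=
    isCompact_Icc.exists_bound_of_continuousOn (hf.continuous_deriv le_rfl).continuousOn
  have hy0 := hyK (left_mem_Icc.mpr zero_le_two)
  have hM₀0 : 0 ≤ M₀ := (norm_nonneg _).trans (hM₀ _ hy0)
  have hM₁0 : 0 ≤ M₁ := (norm_nonneg _).trans (hM₁ _ hy0)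
  refine ⟨M₀ * Lx + M₁ * CA, by positivity, fun h hh1 s hs t ht hst => ?_⟩
  have hh0 : 0 ≤ h := (abs_nonneg _).trans hst
  have hfst : |(f (y s) + f (y t)) / 2| ≤ M₀ := by
    have h1 : |f (y s)| ≤ M₀ := hM₀ _ (hyK hs)
    have h2 : |f (y t)| ≤ M₀ := hM₀ _ (hyK ht)
    rw [abs_div, abs_two]
    linarith [abs_add_le (f (y s)) (f (y t))]
  have hdfs : |deriv f (y s)| ≤ M₁ := hM₁ _ (hyK hs)
  have hxst : |x t - x s| ≤ Lx * h ^ α := (hx s hs t ht).trans (by gcongr)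
  have hAst : |A s t| ≤ CA * h ^ α := by
    refine (hA s hs t ht).trans (mul_le_mul_of_nonneg_left ?_ hCA.le)
    calc |t - s| ^ (2 * α) ≤ h ^ (2 * α) :=
          Real.rpow_le_rpow (abs_nonneg _) hst (by positivity)
      _ ≤ h ^ α := Real.rpow_le_rpow_of_exponent_ge' hh0 hh1 hα (by linarith)
  calc |corrIncr x y A f s t|
      ≤ |(f (y s) + f (y t)) / 2| * |x t - x s| + |deriv f (y s)| * |A s t| :=
        (abs_add_le _ _).trans_eq (by rw [abs_mul, abs_mul])
    _ ≤ M₀ * (Lx * h ^ α) + M₁ * (CA * h ^ α) := by gcongr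
    _ = (M₀ * Lx + M₁ * CA) * h ^ α := by ring

end CorrIncr

section Integrability

variable {x y : ℝ → ℝ} {A : ℝ → ℝ → ℝ} {f : ℝ → ℝ} {c : ℝ}

theorem continuousOn_symmetric_integrand (hx : ContinuousOn x (Icc 0 2))
    (hy : ContinuousOn y (Icc 0 2)) (hf : Continuous f) (hc : 0 ≤ c) :
    ContinuousOn (fun u => (f (y u) + f (y (u + c))) / 2 * (x (u + c) - x u))
      (Icc 0 (2 - c)) := by
  have hsub : Icc 0 (2 - c) ⊆ Icc (0:ℝ) 2 := Icc_subset_Icc_right (by linarith)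
  have hshift : MapsTo (· + c) (Icc 0 (2 - c)) (Icc (0:ℝ) 2) :=
    fun u hu => ⟨by linarith [hu.1], by linarith [hu.2]⟩
  have hx' := hx.comp (continuous_add_const c).continuousOn hshift
  have hy' := hy.comp (continuous_add_const c).continuousOn hshift
  exact (((hf.comp_continuousOn (hy.mono hsub)).add (hf.comp_continuousOn hy')).div_const 2).mul
    (hx'.sub (hx.mono hsub))

theorem continuousOn_area_integrand (hy : ContinuousOn y (Icc 0 2))
    (hA : ContinuousOn (Function.uncurry A) (Icc 0 2 ×ˢ Icc 0 2)) (hf' : Continuous (deriv f))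
    (hc : 0 ≤ c) :
    ContinuousOn (fun u => deriv f (y u) * A u (u + c)) (Icc 0 (2 - c)) := by
  have hsub : Icc 0 (2 - c) ⊆ Icc (0:ℝ) 2 := Icc_subset_Icc_right (by linarith)
  have hpair : MapsTo (fun u => (u, u + c)) (Icc 0 (2 - c)) (Icc (0:ℝ) 2 ×ˢ Icc (0:ℝ) 2) :=
    fun u hu => ⟨hsub hu, by linarith [hu.1], by linarith [hu.2]⟩
  exact (hf'.comp_continuousOn (hy.mono hsub)).mul
    (hA.comp (continuousOn_id.prodMk (continuous_add_const c).continuousOn) hpair)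

variable (hx : ContinuousOn x (Icc 0 2)) (hy : ContinuousOn y (Icc 0 2))
  (hA : ContinuousOn (Function.uncurry A) (Icc 0 2 ×ˢ Icc 0 2)) (hf : ContDiff ℝ 1 f)
include hx hy hA hf

theorem intervalIntegrable_corrIncr (hc : 0 ≤ c) {a b : ℝ} (ha : a ∈ Icc 0 (2 - c))
    (hb : b ∈ Icc 0 (2 - c)) :
    IntervalIntegrable (fun u => corrIncr x y A f u (u + c)) volume a b :=
  (((continuousOn_symmetric_integrand hx hy hf.continuous hc).add
    (continuousOn_area_integrand hy hA (hf.continuous_deriv le_rfl) hc)).mono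
      (uIcc_subset_Icc ha hb)).intervalIntegrable

theorem Ieps_eq_integral_corrIncr (hc : 0 ≤ c) {a b : ℝ} (ha : a ∈ Icc 0 (2 - c))
    (hb : b ∈ Icc 0 (2 - c)) :
    Ieps x y A f a b c = c⁻¹ * ∫ u in a..b, corrIncr x y A f u (u + c) := by
  have hsub := uIcc_subset_Icc ha hb
  rw [Ieps, ← mul_add, ← intervalIntegral.integral_add
    ((continuousOn_symmetric_integrand hx hy hf.continuous hc).mono hsub).intervalIntegrable
    ((continuousOn_area_integrand hy hA (hf.continuous_deriv le_rfl) hc).mono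
      hsub).intervalIntegrable]
  rfl

theorem abs_Ieps_half_sub_Ieps_le {a b h D B : ℝ} (hh : 0 < h) (ha : 0 ≤ a) (hab : a ≤ b)
    (hb : b + h ≤ 2)
    (hD : ∀ u ∈ Icc a b, |corrIncr x y A f u (u + h / 2) + corrIncr x y A f (u + h / 2) (u + h)
      - corrIncr x y A f u (u + h)| ≤ D)
    (hB : ∀ u ∈ Icc a (b + h / 2), |corrIncr x y A f u (u + h / 2)| ≤ B) :
    |Ieps x y A f a b (h / 2) - Ieps x y A f a b h| ≤ h⁻¹ * (D * (b - a) + h * B) := by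
  have mem {c p : ℝ} (hp : a ≤ p) (hpc : p + c ≤ 2) : p ∈ Icc 0 (2 - c) :=
    ⟨ha.trans hp, by linarith⟩
  have hbound := abs_two_mul_integral_sub_integral_le (by positivity) hab
    (intervalIntegrable_corrIncr hx hy hA hf (c := h / 2) (by positivity)
      (mem le_rfl (by linarith)) (mem (by linarith) (by linarith)))
    (intervalIntegrable_corrIncr hx hy hA hf hh.le (mem le_rfl (by linarith)) (mem hab hb))
    (fun u hu => by rw [add_assoc, add_halves]; exact hD u hu) hB
  rw [Ieps_eq_integral_corrIncr hx hy hA hf (by positivity) (mem le_rfl (by linarith))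
      (mem hab (by linarith)),
    Ieps_eq_integral_corrIncr hx hy hA hf hh.le (mem le_rfl (by linarith)) (mem hab hb)]
  rw [show ∀ I J : ℝ, (h / 2)⁻¹ * I - h⁻¹ * J = h⁻¹ * (2 * I - J) from fun I J => by field_simp,
    abs_mul, abs_of_pos (inv_pos.mpr hh)]
  gcongr
  linarith

end Integrability

theorem exists_abs_Ieps_half_sub_Ieps_le {α : ℝ} {x y : ℝ → ℝ} {A : ℝ → ℝ → ℝ} {f : ℝ → ℝ}
    (hα : 0 < α) (hx : HolderOnIcc α 0 2 x) (hy : HolderOnIcc α 0 2 y)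
    (hA : IsLevyArea0 α x y A) (hf : ContDiff ℝ 2 f) :
    ∃ C > 0, ∀ h ∈ Ioc (0:ℝ) 1, ∀ b ∈ Icc (0:ℝ) 1,
      |Ieps x y A f 0 b (h / 2) - Ieps x y A f 0 b h| ≤ C * h ^ min (3 * α - 1) α := by
  have hxc := hx.continuousOn hα
  have hyc := hy.continuousOn hα
  have hf1 : ContDiff ℝ 1 f := hf.of_le (by norm_num)
  obtain ⟨K, hK⟩ := isCompact_Icc.exists_bound_of_continuousOn hyc
  have hyK : MapsTo y (Icc 0 2) (Icc (-K) K) := fun u hu => abs_le.mp (hK u hu)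
  obtain ⟨D, hD0, hD⟩ := exists_abs_corrIncr_add_corrIncr_sub_le hα.le hx hy hA hf hyK
  obtain ⟨B, hB0, hB⟩ := exists_abs_corrIncr_le hα.le hx hA hf1 hyK
  refine ⟨D + B + 1, by positivity, fun h ⟨hh0, hh1⟩ b ⟨hb0, hb1⟩ => ?_⟩
  refine (abs_Ieps_half_sub_Ieps_le hxc hyc (hA.continuousOn hα hxc hyc) hf1 hh0 le_rfl hb0
    (by linarith) (D := D * h ^ (3 * α)) (B := B * h ^ α) (fun u ⟨hu0, hu⟩ => ?_)
    (fun u ⟨hu0, hu⟩ => ?_)).trans ?_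
  · refine hD h hh0.le u ⟨hu0, by linarith⟩ _ ⟨by linarith, by linarith⟩ _
      ⟨by linarith, by linarith⟩ ?_ ?_ <;>
    · rw [abs_of_nonneg (by linarith)]; linarith
  · refine hB h hh1 u ⟨hu0, by linarith⟩ _ ⟨by linarith, by linarith⟩ ?_
    rw [add_sub_cancel_left, abs_of_pos (by positivity)]
    linarith
  · set θ := min (3 * α - 1) α
    have hθ {p : ℝ} (hp : θ ≤ p) : h ^ p ≤ h ^ θ := Real.rpow_le_rpow_of_exponent_ge hh0 hh1 hp
    calc h⁻¹ * (D * h ^ (3 * α) * (b - 0) + h * (B * h ^ α))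
        = D * h ^ (3 * α - 1) * b + B * h ^ α := by
          rw [sub_zero, Real.rpow_sub hh0, Real.rpow_one]; field_simp
      _ ≤ D * h ^ (3 * α - 1) + B * h ^ α :=
          add_le_add_left (mul_le_of_le_one_right (by positivity) hb1) _
      _ ≤ D * h ^ θ + B * h ^ θ :=
          add_le_add (mul_le_mul_of_nonneg_left (hθ (min_le_left _ _)) hD0)
            (mul_le_mul_of_nonneg_left (hθ (min_le_right _ _)) hB0)
      _ ≤ (D + B + 1) * h ^ θ := by nlinarith [Real.rpow_nonneg hh0.le θ]

theorem Idyad_eq_Ieps (x y : ℝ → ℝ) (A : ℝ → ℝ → ℝ) (f : ℝ → ℝ) (n : ℕ) (ε : ℝ) :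
    Idyad x y A f n ε = Ieps x y A f 0 (ε * ⌊1 / ε⌋) (ε / 2 ^ n) := by
  rw [Idyad, Ieps, inv_div, div_eq_mul_inv ((2:ℝ) ^ n) ε]

theorem mul_floor_one_div_mem_Icc {ε : ℝ} (hε : 0 < ε) : ε * ⌊1 / ε⌋ ∈ Icc (0:ℝ) 1 := by
  refine ⟨by positivity, ?_⟩
  calc ε * ⌊1 / ε⌋ ≤ ε * (1 / ε) := by gcongr; exact Int.floor_le _
    _ = 1 := by field_simp

theorem stmt_4 (α : ℝ) (hα : α ∈ Set.Ioo (1/3 : ℝ) 1)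
    (x y : ℝ → ℝ) (hx : HolderOnIcc α 0 2 x) (hy : HolderOnIcc α 0 2 y)
    (A : ℝ → ℝ → ℝ) (hA : IsLevyArea0 α x y A)
    (f : ℝ → ℝ) (hf : ContDiff ℝ 2 f) :
    ∃ C > 0, ∀ (n : ℕ), ∀ ε ∈ Set.Ioc (0:ℝ) 1,
      |Idyad x y A f (n + 1) ε - Idyad x y A f n ε|
        ≤ C * (ε / 2 ^ n) ^ min (3 * α - 1) α := by
  obtain ⟨C, hC, hbound⟩ :=
    exists_abs_Ieps_half_sub_Ieps_le (by linarith [hα.1]) hx hy hA hf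
  refine ⟨C, hC, fun n ε ⟨hε0, hε1⟩ => ?_⟩
  have hstep : ε / 2 ^ n ∈ Ioc (0:ℝ) 1 :=
    ⟨by positivity, div_le_one_of_le₀ (hε1.trans (one_le_pow₀ one_le_two)) (by positivity)⟩
  rw [Idyad_eq_Ieps, Idyad_eq_Ieps, pow_succ, ← div_div]
  exact hbound _ hstep _ (mul_floor_one_div_mem_Icc hε0)
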